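/- Fix an integer k ≥ 2, real numbers λ < 0 and α ≥ −k, and define for x ∈ (0,1] the function u(x) = e^{−(λ/(1−k)) x^{1−k}} ∫₁ˣ e^{(λ/(1−k)) y^{1−k}} y^{α} dy. Then u solves u' + (λ/x^k) u = x^{α} on (0,1), and there is a constant C > 0 such that |u(x)| ≤ C x^{α+k} for all sufficiently small x > 0. -/

import Mathlib

open MeasureTheory Real Filter

noncomputable def cuspG (k : ℕ) (lam α : ℝ) (y : ℝ) : ℝ :=
  Real.exp ((lam / (1 - (k : ℝ))) * y ^ (1 - (k : ℝ))) * y ^ α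

lemma cuspG_contAt (k : ℕ) (lam α : ℝ) {y : ℝ} (hy : 0 < y) :
    ContinuousAt (cuspG k lam α) y := by
  have h1 : ContinuousAt (fun y : ℝ => y ^ (1 - (k : ℝ))) y :=
    Real.continuousAt_rpow_const y _ (Or.inl hy.ne')
  have h2 : ContinuousAt (fun y : ℝ => y ^ α) y :=
    Real.continuousAt_rpow_const y _ (Or.inl hy.ne')
  exact ((Real.continuous_exp.continuousAt.comp (h1.const_mul _))).mul h2

lemma cuspG_intble (k : ℕ) (lam α : ℝ) {a b : ℝ} (ha : 0 < a) (hb : 0 < b) :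
    IntervalIntegrable (cuspG k lam α) volume a b := by
  apply ContinuousOn.intervalIntegrable
  intro y hy
  have hy0 : 0 < y := lt_of_lt_of_le (lt_min ha hb) hy.1
  exact (cuspG_contAt k lam α hy0).continuousWithinAt

lemma cuspG_nonneg (k : ℕ) (lam α : ℝ) {y : ℝ} (hy : 0 ≤ y) : 0 ≤ cuspG k lam α y :=
  mul_nonneg (Real.exp_pos _).le (Real.rpow_nonneg hy _)

theorem part1 (k : ℕ) (hk : 2 ≤ k) (lam α : ℝ) (hlam : lam < 0)
    (u : ℝ → ℝ)
    (hu : ∀ x : ℝ, 0 < x →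
      u x = Real.exp (-(lam / (1 - (k : ℝ))) * x ^ (1 - (k : ℝ))) *
        ∫ y in (1 : ℝ)..x, Real.exp ((lam / (1 - (k : ℝ))) * y ^ (1 - (k : ℝ))) * y ^ α) :
    (∀ x ∈ Set.Ioo (0 : ℝ) 1,
      HasDerivAt u (x ^ α - (lam / x ^ (k : ℝ)) * u x) x) := by
  have hk2 : (2 : ℝ) ≤ (k : ℝ) := by exact_mod_cast hk
  have hkne : (1 : ℝ) - (k : ℝ) ≠ 0 := by linarith
  set m : ℝ := lam / (1 - (k : ℝ)) with hm_def
  have hml : m * (1 - (k : ℝ)) = lam := div_mul_cancel₀ lam hkne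
  have hu' : ∀ x : ℝ, 0 < x →
      u x = Real.exp (-m * x ^ (1 - (k : ℝ))) * ∫ y in (1 : ℝ)..x, cuspG k lam α y := hu
  intro x hx
  obtain ⟨hx0, hx1⟩ := hx
  have hp : HasDerivAt (fun t : ℝ => t ^ (1 - (k : ℝ)))
      ((1 - (k : ℝ)) * x ^ (1 - (k : ℝ) - 1)) x :=
    Real.hasDerivAt_rpow_const (Or.inl hx0.ne')
  have hE : HasDerivAt (fun t : ℝ => Real.exp (-m * t ^ (1 - (k : ℝ))))
      (Real.exp (-m * x ^ (1 - (k : ℝ))) * (-m * ((1 - (k : ℝ)) * x ^ (1 - (k : ℝ) - 1)))) x :=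
    (hp.const_mul (-m)).exp
  have hF : HasDerivAt (fun t : ℝ => ∫ y in (1 : ℝ)..t, cuspG k lam α y) (cuspG k lam α x) x := by
    refine intervalIntegral.integral_hasDerivAt_right (cuspG_intble k lam α one_pos hx0) ?_
      (cuspG_contAt k lam α hx0)
    exact ⟨Set.Ioi 0, isOpen_Ioi.mem_nhds hx0,
      (continuousOn_of_forall_continuousAt (fun y hy => cuspG_contAt k lam α hy)).aestronglyMeasurable
        measurableSet_Ioi⟩
  have hprod := hE.mul hF
  have hequ : u =ᶠ[nhds x]
      (fun t => Real.exp (-m * t ^ (1 - (k : ℝ))) * ∫ y in (1 : ℝ)..t, cuspG k lam α y) := by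
    filter_upwards [isOpen_Ioi.mem_nhds hx0] with t ht
    exact hu' t ht
  have hmain := hprod.congr_of_eventuallyEq hequ
  refine hmain.congr_deriv ?_
  symm
  rw [hu' x hx0]
  rw [show (1 - (k : ℝ) - 1) = -(k : ℝ) by ring, Real.rpow_neg hx0.le]
  have hgx : Real.exp (-m * x ^ (1 - (k : ℝ))) * cuspG k lam α x = x ^ α := by
    simp only [cuspG]
    rw [← mul_assoc, ← Real.exp_add]
    ring_nf
    rw [show -(m * x ^ (1 - (k : ℝ))) + x ^ (1 - (k : ℝ)) * lam * (1 - (k : ℝ))⁻¹ = 0 by rw [hm_def]; ring,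
      Real.exp_zero, one_mul]
  rw [div_eq_mul_inv]
  linear_combination (-1 : ℝ) * hgx +
    ((x ^ (k : ℝ))⁻¹ * Real.exp (-m * x ^ (1 - (k : ℝ))) *
      ∫ y in (1 : ℝ)..x, cuspG k lam α y) * hml
  

theorem part2 (k : ℕ) (hk : 2 ≤ k) (lam α : ℝ) (hlam : lam < 0)
    (hα : -(k : ℝ) ≤ α) (u : ℝ → ℝ)
    (hu : ∀ x : ℝ, 0 < x →
      u x = Real.exp (-(lam / (1 - (k : ℝ))) * x ^ (1 - (k : ℝ))) *
        ∫ y in (1 : ℝ)..x, Real.exp ((lam / (1 - (k : ℝ))) * y ^ (1 - (k : ℝ))) * y ^ α) :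
    ∃ C : ℝ, 0 < C ∧ ∃ ε : ℝ, 0 < ε ∧
      ∀ x : ℝ, 0 < x → x ≤ ε → |u x| ≤ C * x ^ (α + (k : ℝ)) := by
  have hk2 : (2 : ℝ) ≤ (k : ℝ) := by exact_mod_cast hk
  have hkne : (1 : ℝ) - (k : ℝ) ≠ 0 := by linarith
  have hlam' : (0 : ℝ) < -lam := by linarith
  set m : ℝ := lam / (1 - (k : ℝ)) with hm_def
  have hml : m * (1 - (k : ℝ)) = lam := div_mul_cancel₀ lam hkne
  have hm : 0 < m := div_pos_of_neg_of_neg hlam (by linarith)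
  have hu' : ∀ x : ℝ, 0 < x →
      u x = Real.exp (-m * x ^ (1 - (k : ℝ))) * ∫ y in (1 : ℝ)..x, cuspG k lam α y := hu
  have hαk : (0 : ℝ) ≤ α + (k : ℝ) := by linarith
  set A : ℝ := (α + (k : ℝ)) / (-lam) with hA_def
  have hA : 0 ≤ A := div_nonneg hαk hlam'.le
  have hA' : A * (-lam) = α + (k : ℝ) := div_mul_cancel₀ _ hlam'.ne'
  set ε₀ : ℝ := min 1 (1 / (2 * (A + 1))) with hε₀_def
  have hε₀pos : 0 < ε₀ := lt_min one_pos (by positivity)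
  have hε₀1 : ε₀ ≤ 1 := min_le_left _ _
  have hAε : A * ε₀ ^ ((k : ℝ) - 1) ≤ 1 / 2 := by
    have h1 : ε₀ ^ ((k : ℝ) - 1) ≤ ε₀ ^ (1 : ℝ) :=
      Real.rpow_le_rpow_of_exponent_ge hε₀pos hε₀1 (by linarith)
    rw [Real.rpow_one] at h1
    have h2 : ε₀ ≤ 1 / (2 * (A + 1)) := min_le_right _ _
    have h3 : A * ε₀ ≤ A * (1 / (2 * (A + 1))) :=
      mul_le_mul_of_nonneg_left (h2.trans_eq rfl) hA
    have h4 : A * (1 / (2 * (A + 1))) ≤ 1 / 2 := by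
      rw [mul_one_div, div_le_div_iff₀ (by positivity) two_pos]
      nlinarith
    have h5 : A * ε₀ ^ ((k : ℝ) - 1) ≤ A * ε₀ := mul_le_mul_of_nonneg_left h1 hA
    linarith
  set G : ℝ → ℝ := fun y => Real.exp (m * y ^ (1 - (k : ℝ))) * y ^ (α + (k : ℝ)) / (-lam)
    with hG_def
  have hGnonneg : ∀ y : ℝ, 0 ≤ y → 0 ≤ G y := fun y hy =>
    div_nonneg (mul_nonneg (Real.exp_pos _).le (Real.rpow_nonneg hy _)) hlam'.le
  have hGderiv : ∀ y : ℝ, 0 < y →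
      HasDerivAt G (cuspG k lam α y * (A * y ^ ((k : ℝ) - 1) - 1)) y := by
    intro y hy
    have hp : HasDerivAt (fun t : ℝ => t ^ (1 - (k : ℝ)))
        ((1 - (k : ℝ)) * y ^ (1 - (k : ℝ) - 1)) y :=
      Real.hasDerivAt_rpow_const (Or.inl hy.ne')
    have hE2 : HasDerivAt (fun t : ℝ => Real.exp (m * t ^ (1 - (k : ℝ))))
        (Real.exp (m * y ^ (1 - (k : ℝ))) * (m * ((1 - (k : ℝ)) * y ^ (1 - (k : ℝ) - 1)))) y :=
      (hp.const_mul m).exp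
    have hP : HasDerivAt (fun t : ℝ => t ^ (α + (k : ℝ)))
        ((α + (k : ℝ)) * y ^ (α + (k : ℝ) - 1)) y :=
      Real.hasDerivAt_rpow_const (Or.inl hy.ne')
    have hD := (hE2.mul hP).div_const (-lam)
    refine hD.congr_deriv ?_
    symm
    have e1 : y ^ (1 - (k : ℝ) - 1) * y ^ (α + (k : ℝ)) = y ^ α := by
      rw [← Real.rpow_add hy, show (1 - (k : ℝ) - 1) + (α + (k : ℝ)) = α by ring]
    have e2 : y ^ (α + (k : ℝ) - 1) = y ^ ((k : ℝ) - 1) * y ^ α := by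
      rw [← Real.rpow_add hy, show ((k : ℝ) - 1) + α = α + (k : ℝ) - 1 by ring]
    rw [eq_div_iff hlam'.ne']
    simp only [cuspG]
    linear_combination (-(Real.exp (m * y ^ (1 - (k : ℝ)))) * lam) * e1 +
      (-(Real.exp (m * y ^ (1 - (k : ℝ)))) * (α + (k : ℝ))) * e2 +
      (-(Real.exp (m * y ^ (1 - (k : ℝ)))) * y ^ (1 - (k : ℝ) - 1) * y ^ (α + (k : ℝ))) * hml +
      (Real.exp (m * y ^ (1 - (k : ℝ))) * y ^ ((k : ℝ) - 1) * y ^ α) * hA'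
  have hG'cont : ∀ {a b : ℝ}, 0 < a → 0 < b →
      IntervalIntegrable (fun y => cuspG k lam α y * (A * y ^ ((k : ℝ) - 1) - 1))
        volume a b := by
    intro a b ha hb
    apply ContinuousOn.intervalIntegrable
    intro y hy
    have hy0 : 0 < y := lt_of_lt_of_le (lt_min ha hb) hy.1
    exact ((cuspG_contAt k lam α hy0).mul
      (((Real.continuousAt_rpow_const y _ (Or.inl hy0.ne')).const_mul A).sub
        continuousAt_const)).continuousWithinAt
  have hkey : ∀ x : ℝ, 0 < x → x ≤ ε₀ →
      (∫ y in x..ε₀, cuspG k lam α y) ≤ 2 * G x := by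
    intro x hx hxe
    have hint1 := cuspG_intble k lam α hx hε₀pos
    have hint2 : IntervalIntegrable
        (fun y => (-2 : ℝ) * (cuspG k lam α y * (A * y ^ ((k : ℝ) - 1) - 1)))
        volume x ε₀ := (hG'cont hx hε₀pos).const_mul _
    have step1 : ∀ y ∈ Set.Icc x ε₀,
        cuspG k lam α y ≤ -2 * (cuspG k lam α y * (A * y ^ ((k : ℝ) - 1) - 1)) := by
      intro y hy
      have hy0 : 0 < y := hx.trans_le hy.1
      have hrp : y ^ ((k : ℝ) - 1) ≤ ε₀ ^ ((k : ℝ) - 1) :=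
        Real.rpow_le_rpow hy0.le hy.2 (by linarith)
      have hAy : A * y ^ ((k : ℝ) - 1) ≤ 1 / 2 :=
        (mul_le_mul_of_nonneg_left hrp hA).trans hAε
      have hg0 : 0 ≤ cuspG k lam α y := cuspG_nonneg k lam α hy0.le
      nlinarith
    have step2 := intervalIntegral.integral_mono_on hxe hint1 hint2 step1
    have step3 : (∫ y in x..ε₀, cuspG k lam α y * (A * y ^ ((k : ℝ) - 1) - 1))
        = G ε₀ - G x := by
      apply intervalIntegral.integral_eq_sub_of_hasDerivAt
      · intro y hy
        rw [Set.uIcc_of_le hxe] at hy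
        exact hGderiv y (hx.trans_le hy.1)
      · exact hG'cont hx hε₀pos
    rw [intervalIntegral.integral_const_mul, step3] at step2
    have hGε := hGnonneg ε₀ hε₀pos.le
    linarith
  set B : ℝ := ∫ y in ε₀..(1 : ℝ), cuspG k lam α y with hB_def
  have hB : 0 ≤ B :=
    intervalIntegral.integral_nonneg hε₀1
      (fun y hy => cuspG_nonneg k lam α (hε₀pos.trans_le hy.1).le)
  have hbound : ∀ x : ℝ, 0 < x → x ≤ ε₀ →
      |u x| ≤ 2 / (-lam) * x ^ (α + (k : ℝ)) + B * Real.exp (-m * x ^ (1 - (k : ℝ))) := by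
    intro x hx hxe
    have hadd := intervalIntegral.integral_add_adjacent_intervals
      (cuspG_intble k lam α hx hε₀pos) (cuspG_intble k lam α hε₀pos one_pos)
    have hsym : (∫ y in (1 : ℝ)..x, cuspG k lam α y) = -(∫ y in x..(1 : ℝ), cuspG k lam α y) :=
      (intervalIntegral.integral_symm x 1)
    have hnn1 : 0 ≤ ∫ y in x..ε₀, cuspG k lam α y :=
      intervalIntegral.integral_nonneg hxe (fun y hy => cuspG_nonneg k lam α (hx.trans_le hy.1).le)
    have hS : 0 ≤ ∫ y in x..(1 : ℝ), cuspG k lam α y := by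
      rw [← hadd]; exact add_nonneg hnn1 hB
    have habs : |u x| = Real.exp (-m * x ^ (1 - (k : ℝ))) *
        ((∫ y in x..ε₀, cuspG k lam α y) + B) := by
      rw [hu' x hx, hsym, hB_def, hadd]
      rw [abs_mul, abs_neg, abs_of_nonneg hS, abs_of_pos (Real.exp_pos _)]
    rw [habs, mul_add]
    have hexp1 : Real.exp (-m * x ^ (1 - (k : ℝ))) * Real.exp (m * x ^ (1 - (k : ℝ))) = 1 := by
      rw [← Real.exp_add]; ring_nf; exact Real.exp_zero
    have hterm1 : Real.exp (-m * x ^ (1 - (k : ℝ))) * (∫ y in x..ε₀, cuspG k lam α y)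
        ≤ 2 / (-lam) * x ^ (α + (k : ℝ)) := by
      have h := mul_le_mul_of_nonneg_left (hkey x hx hxe) (Real.exp_pos (-m * x ^ (1 - (k : ℝ)))).le
      calc Real.exp (-m * x ^ (1 - (k : ℝ))) * (∫ y in x..ε₀, cuspG k lam α y)
          ≤ Real.exp (-m * x ^ (1 - (k : ℝ))) * (2 * G x) := h
        _ = 2 / (-lam) * x ^ (α + (k : ℝ)) := by
            have h2 : Real.exp (-m * x ^ (1 - (k : ℝ))) * (2 * G x)
                = 2 * x ^ (α + (k : ℝ)) / (-lam) *
                  (Real.exp (-m * x ^ (1 - (k : ℝ))) * Real.exp (m * x ^ (1 - (k : ℝ)))) := by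
              simp only [hG_def]; ring
            rw [h2, hexp1, mul_one]; ring
    have hterm2 : Real.exp (-m * x ^ (1 - (k : ℝ))) * B = B * Real.exp (-m * x ^ (1 - (k : ℝ))) :=
      mul_comm _ _
    linarith [hterm1, hterm2.le, hterm2.ge]
  -- decay of the exponential term
  have h1 : Tendsto (fun x : ℝ => x ^ (1 - (k : ℝ))) (nhdsWithin 0 (Set.Ioi 0)) atTop := by
    have h := (tendsto_rpow_atTop (show (0 : ℝ) < (k : ℝ) - 1 by linarith)).comp
      tendsto_inv_nhdsGT_zero
    refine h.congr' ?_
    filter_upwards [self_mem_nhdsWithin] with x hx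
    have hx0 : (0 : ℝ) < x := hx
    show (x⁻¹) ^ ((k : ℝ) - 1) = x ^ (1 - (k : ℝ))
    rw [Real.inv_rpow hx0.le, ← Real.rpow_neg hx0.le,
      show -(((k : ℝ)) - 1) = 1 - (k : ℝ) by ring]
  have h2 := tendsto_rpow_mul_exp_neg_mul_atTop_nhds_zero ((α + (k : ℝ)) / ((k : ℝ) - 1)) m hm
  have h4 : Tendsto (fun x : ℝ => x ^ (-(α + (k : ℝ))) * Real.exp (-m * x ^ (1 - (k : ℝ))))
      (nhdsWithin 0 (Set.Ioi 0)) (nhds 0) := by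
    refine (h2.comp h1).congr' ?_
    filter_upwards [self_mem_nhdsWithin] with x hx
    have hx0 : (0 : ℝ) < x := hx
    simp only [Function.comp_apply]
    congr 1
    have hk1 : (k : ℝ) - 1 ≠ 0 := by linarith
    rw [← Real.rpow_mul hx0.le]
    congr 1
    field_simp
    ring
  have h5 := h4.const_mul B
  rw [mul_zero] at h5
  have hev : ∀ᶠ x in nhdsWithin 0 (Set.Ioi 0),
      B * (x ^ (-(α + (k : ℝ))) * Real.exp (-m * x ^ (1 - (k : ℝ)))) < 1 :=
    h5.eventually_lt_const one_pos
  rw [eventually_nhdsWithin_iff, Metric.eventually_nhds_iff] at hev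
  obtain ⟨δ, hδ, hball⟩ := hev
  refine ⟨2 / (-lam) + 1, add_pos (div_pos two_pos hlam') one_pos,
    min ε₀ (δ / 2), lt_min hε₀pos (by linarith), ?_⟩
  intro x hx hxε
  have hxe : x ≤ ε₀ := hxε.trans (min_le_left _ _)
  have hxδ : dist x 0 < δ := by
    rw [Real.dist_eq, sub_zero, abs_of_pos hx]
    have := hxε.trans (min_le_right _ _); linarith
  have hP := hball hxδ (Set.mem_Ioi.mpr hx)
  have hxpow : (0 : ℝ) < x ^ (α + (k : ℝ)) := Real.rpow_pos_of_pos hx _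
  have hBE : B * Real.exp (-m * x ^ (1 - (k : ℝ))) ≤ x ^ (α + (k : ℝ)) := by
    rw [Real.rpow_neg hx.le] at hP
    have h6 : B * Real.exp (-m * x ^ (1 - (k : ℝ)))
        = (B * ((x ^ (α + (k : ℝ)))⁻¹ * Real.exp (-m * x ^ (1 - (k : ℝ))))) * x ^ (α + (k : ℝ)) := by
      field_simp
    rw [h6]
    calc (B * ((x ^ (α + (k : ℝ)))⁻¹ * Real.exp (-m * x ^ (1 - (k : ℝ))))) * x ^ (α + (k : ℝ))
        ≤ 1 * x ^ (α + (k : ℝ)) := mul_le_mul_of_nonneg_right hP.le hxpow.le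
      _ = x ^ (α + (k : ℝ)) := one_mul _
  have hb := hbound x hx hxe
  have : (2 / (-lam) + 1) * x ^ (α + (k : ℝ))
      = 2 / (-lam) * x ^ (α + (k : ℝ)) + x ^ (α + (k : ℝ)) := by ring
  linarith


/-- For `k ≥ 2`, `λ < 0`, `α ≥ −k`, the function
`u(x) = e^{−(λ/(1−k)) x^{1−k}} ∫₁ˣ e^{(λ/(1−k)) y^{1−k}} y^α dy` solves
`u' + (λ/xᵏ) u = x^α` on `(0,1)` and satisfies `|u(x)| ≤ C x^{α+k}` for all
sufficiently small `x > 0`. -/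
theorem model_cusp_ode (k : ℕ) (hk : 2 ≤ k) (lam α : ℝ) (hlam : lam < 0)
    (hα : -(k : ℝ) ≤ α) (u : ℝ → ℝ)
    (hu : ∀ x : ℝ, 0 < x →
      u x = Real.exp (-(lam / (1 - (k : ℝ))) * x ^ (1 - (k : ℝ))) *
        ∫ y in (1 : ℝ)..x, Real.exp ((lam / (1 - (k : ℝ))) * y ^ (1 - (k : ℝ))) * y ^ α) :
    (∀ x ∈ Set.Ioo (0 : ℝ) 1,
      HasDerivAt u (x ^ α - (lam / x ^ (k : ℝ)) * u x) x) ∧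
    ∃ C : ℝ, 0 < C ∧ ∃ ε : ℝ, 0 < ε ∧
      ∀ x : ℝ, 0 < x → x ≤ ε → |u x| ≤ C * x ^ (α + (k : ℝ)) :=
  ⟨part1 k hk lam α hlam u hu, part2 k hk lam α hlam hα u hu⟩
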